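/- If G is a group of type Φ_k, then the finitistic dimension of kG is finite: there exists an integer n such that every kG-module of finite projective dimension has projective dimension at most n. -/

import Mathlib

/-!
Background definitions.

Throughout, for a commutative ring `k` and a group `G`, the group algebra `kG` is
`MonoidAlgebra k G`, and `kG`-modules are (possibly infinitely generated) modules over
`MonoidAlgebra k G`.
-/

universe u v

open scoped TensorProduct DirectSum

/-- `M` has projective dimension at most `n` over `R` (i.e. it admits a projective
resolution of length at most `n`). -/
def HasProjDimLE (R : Type u) [Ring R] :
    (n : ℕ) → (M : Type v) → [AddCommMonoid M] → [Module R M] → Prop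
  | 0, M, _, _ => Module.Projective R M
  | n + 1, M, _, _ =>
    ∃ (P : Type v) (_ : AddCommMonoid P) (_ : Module R P) (f : P →ₗ[R] M),
      Module.Projective R P ∧ Function.Surjective f ∧
        HasProjDimLE R n (LinearMap.ker f)

/-- `M` has finite projective dimension over `R`. -/
def HasFinProjDim (R : Type u) [Ring R] (M : Type v) [AddCommMonoid M] [Module R M] : Prop :=
  ∃ n, HasProjDimLE R n M

/-- The global dimension of `R` is at most `d` : every `R`-module has projective dimension
at most `d`. -/
def GlobalDimLE (R : Type u) [Ring R] (d : ℕ) : Prop :=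
  ∀ (M : Type u) (_ : AddCommMonoid M) (_ : Module R M), HasProjDimLE R d M

section GroupAlgebra

variable (k : Type u) [CommRing k] (G : Type u) [Group G]

/-- The canonical ring homomorphism `kF → kG` induced by the inclusion of a subgroup `F ≤ G`. -/
noncomputable def subgroupInclusion (F : Subgroup G) :
    MonoidAlgebra k F →+* MonoidAlgebra k G :=
  MonoidAlgebra.mapDomainRingHom k F.subtype

/-- The restriction of a `kG`-module `M` to a `kF`-module, for a subgroup `F ≤ G`. -/
noncomputable def restrictToSubgroup (F : Subgroup G) (M : Type u) [AddCommMonoid M]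
    [Module (MonoidAlgebra k G) M] : Module (MonoidAlgebra k F) M :=
  Module.compHom M (subgroupInclusion k G F)

/-- A group `G` is of type `Φ_k` if a `kG`-module has finite projective dimension over `kG`
if and only if its restriction to every finite subgroup `F ≤ G` has finite projective
dimension over `kF`. -/
def IsTypePhi : Prop :=
  ∀ (M : Type u) (_ : AddCommMonoid M) (_ : Module (MonoidAlgebra k G) M),
    HasFinProjDim (MonoidAlgebra k G) M ↔
      ∀ (F : Subgroup G), Finite F →
        letI := restrictToSubgroup k G F M
        HasFinProjDim (MonoidAlgebra k F) M

/-- The finitistic dimension of `kG` is at most `b` : every `kG`-module of finite projective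
dimension has projective dimension at most `b`. -/
def FindimLE (b : ℕ) : Prop :=
  ∀ (M : Type u) (_ : AddCommMonoid M) (_ : Module (MonoidAlgebra k G) M),
    HasFinProjDim (MonoidAlgebra k G) M → HasProjDimLE (MonoidAlgebra k G) b M

/-- The trivial representation of `G` on `k`. -/
noncomputable abbrev trivRep : Representation k G k :=
  Representation.trivial k (G := G) (V := k)

/-- The trivial `kG`-module `k`. -/
noncomputable abbrev Triv : Type u := (trivRep k G).asModule

/-- `kG ⊗_{kH} k`, the module induced from the trivial `kH`-module `k`, realised as the
quotient of `kG` by the left submodule generated by `{h - 1 : h ∈ H}`, i.e. by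
`kG · I_H` where `I_H` is the augmentation ideal of `kH`. -/
noncomputable def IndTriv (H : Subgroup G) : Type u :=
  MonoidAlgebra k G ⧸ Submodule.span (MonoidAlgebra k G)
    {x : MonoidAlgebra k G | ∃ h ∈ H, x = MonoidAlgebra.of k G h - 1}

noncomputable instance (H : Subgroup G) : AddCommGroup (IndTriv k G H) :=
  inferInstanceAs (AddCommGroup (MonoidAlgebra k G ⧸ _))

noncomputable instance (H : Subgroup G) : Module (MonoidAlgebra k G) (IndTriv k G H) :=
  inferInstanceAs (Module (MonoidAlgebra k G) (MonoidAlgebra k G ⧸ _))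

/-- The restriction of the `kG`-module `M` to the subgroup `H ≤ G` is projective over `kH`. -/
noncomputable def RestrictionProjective (H : Subgroup G) (M : Type u) [AddCommMonoid M]
    [Module (MonoidAlgebra k G) M] : Prop :=
  letI := restrictToSubgroup k G H M
  Module.Projective (MonoidAlgebra k H) M

/-- `M` is a `kG`-lattice, i.e. `M` is projective as a `k`-module (where the `k`-module
structure is obtained by restricting scalars along `k → kG`). -/
noncomputable def IsLatticeModule (M : Type u) [AddCommMonoid M]
    [Module (MonoidAlgebra k G) M] : Prop :=
  letI : Module k M := Module.compHom M (algebraMap k (MonoidAlgebra k G))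
  Module.Projective k M

/-- `kG`, viewed as a left `kH`-module via left multiplication, for a subgroup `H ≤ G`. -/
noncomputable instance (H : Subgroup G) : Module (MonoidAlgebra k H) (MonoidAlgebra k G) :=
  Module.compHom _ (subgroupInclusion k G H)

/-- Right multiplication by `a : kG` as a `kH`-linear endomorphism of `kG`. -/
noncomputable def rightMulHom (H : Subgroup G) (a : MonoidAlgebra k G) :
    MonoidAlgebra k G →ₗ[MonoidAlgebra k H] MonoidAlgebra k G where
  toFun x := x * a
  map_add' x y := add_mul x y a
  map_smul' b x := by
    show (subgroupInclusion k G H b * x) * a = subgroupInclusion k G H b * (x * a)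
    rw [mul_assoc]

/-- The `kG`-module structure on the coinduced module `Coind^G_H N = Hom_{kH}(kG, N)`
(where `kG` is a left `kH`-module via left multiplication), given by `(a • φ) x = φ (x * a)`;
for `a = g ∈ G` this is `(g • φ) x = φ (x * g)`. -/
noncomputable instance coindModule (H : Subgroup G) (N : Type u) [AddCommGroup N]
    [Module (MonoidAlgebra k H) N] :
    Module (MonoidAlgebra k G) (MonoidAlgebra k G →ₗ[MonoidAlgebra k H] N) where
  smul a φ := LinearMap.comp φ (rightMulHom k G H a)
  one_smul φ := LinearMap.ext fun x => by
    show φ (x * 1) = φ x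
    rw [mul_one]
  mul_smul a b φ := LinearMap.ext fun x => by
    show φ (x * (a * b)) = φ ((x * a) * b)
    rw [mul_assoc]
  smul_zero a := LinearMap.ext fun x => rfl
  smul_add a φ ψ := LinearMap.ext fun x => rfl
  add_smul a b φ := LinearMap.ext fun x => by
    show φ (x * (a + b)) = φ (x * a) + φ (x * b)
    rw [mul_add, map_add]
  zero_smul φ := LinearMap.ext fun x => by
    show φ (x * 0) = 0
    rw [mul_zero, map_zero]

/-- The representation of `G` on the `k`-module of all functions `G → Y`, with
`(g • φ) x = φ (x * g)`; this is the module coinduced from the trivial subgroup,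
`Coind^G_1 Y = Hom_k(kG, Y)`. -/
noncomputable def coindTrivRep (Y : Type u) [AddCommGroup Y] [Module k Y] :
    Representation k G (G → Y) where
  toFun g :=
    { toFun := fun φ x => φ (x * g)
      map_add' := fun φ ψ => rfl
      map_smul' := fun r φ => rfl }
  map_one' := by ext φ x; simp
  map_mul' g h := by ext φ x; simp [mul_assoc]

end GroupAlgebra

/-- `C` is a direct summand of `S` as an `R`-module. -/
def IsSummandOf (R : Type u) [Ring R] (C : Type v) (S : Type v) [AddCommMonoid C] [Module R C]
    [AddCommMonoid S] [Module R S] : Prop :=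
  ∃ (i : C →ₗ[R] S) (p : S →ₗ[R] C), p.comp i = LinearMap.id

/-- An `R`-module is Gorenstein projective if it is (isomorphic to) a kernel of a
differential in a totally acyclic `ℤ`-indexed chain complex of projective `R`-modules,
i.e. an everywhere-exact complex `P_*` of projectives such that `Hom_R(P_*, Q)` is
everywhere exact for every projective `R`-module `Q`. -/
def IsGorensteinProjective (R : Type u) [Ring R] (M : Type u) [AddCommMonoid M]
    [Module R M] : Prop :=
  ∃ (P : ℤ → Type u) (_ : ∀ i, AddCommMonoid (P i)) (_ : ∀ i, Module R (P i))
    (d : ∀ i : ℤ, P (i + 1) →ₗ[R] P i),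
      (∀ i, Module.Projective R (P i)) ∧
      (∀ i : ℤ, Function.Exact (d (i + 1)) (d i)) ∧
      (∀ (Q : Type u) (_ : AddCommMonoid Q) (_ : Module R Q), Module.Projective R Q →
        ∀ i : ℤ, Function.Exact (fun f : P i →ₗ[R] Q => f.comp (d i))
          (fun f : P (i + 1) →ₗ[R] Q => f.comp (d (i + 1)))) ∧
      ∃ i : ℤ, Nonempty (M ≃ₗ[R] LinearMap.ker (d i))

/-- `A` is an `n`-th syzygy of `M` : there is an exact sequence
`0 → A → P_{n-1} → ⋯ → P_0 → M → 0` with all `P_i` projective (for `n = 0` read `A ≅ M`). -/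
def IsSyzygy (R : Type u) [Ring R] :
    (n : ℕ) → (A : Type u) → [AddCommMonoid A] → [Module R A] →
      (M : Type u) → [AddCommMonoid M] → [Module R M] → Prop
  | 0, A, _, _, M, _, _ => Nonempty (A ≃ₗ[R] M)
  | n + 1, A, _, _, M, _, _ =>
    ∃ (P : Type u) (_ : AddCommMonoid P) (_ : Module R P) (f : P →ₗ[R] M),
      Module.Projective R P ∧ Function.Surjective f ∧ IsSyzygy R n A (LinearMap.ker f)

/-- Two `R`-modules `M` and `N` are stably isomorphic : for some `n ≥ 0` there are `n`-th
syzygies `A` of `M` and `B` of `N`, and projective modules `P`, `Q`, with `A ⊕ P ≅ B ⊕ Q`. -/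
def StablyIsomorphic (R : Type u) [Ring R] (M : Type u) [AddCommMonoid M] [Module R M]
    (N : Type u) [AddCommMonoid N] [Module R N] : Prop :=
  ∃ (n : ℕ) (A B : Type u) (_ : AddCommMonoid A) (_ : Module R A)
    (_ : AddCommMonoid B) (_ : Module R B),
      IsSyzygy R n A M ∧ IsSyzygy R n B N ∧
      ∃ (P Q : Type u) (_ : AddCommMonoid P) (_ : Module R P) (_ : AddCommMonoid Q)
        (_ : Module R Q), Module.Projective R P ∧ Module.Projective R Q ∧
          Nonempty ((A × P) ≃ₗ[R] (B × Q))

/-- A homomorphism `f : A → B` of `R`-modules is a stable isomorphism : there are a projective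
module `P` and a surjection `π : P → B` such that the kernel of the combined map
`(f, π) : A ⊕ P → B` has finite projective dimension. -/
def IsStableIso (R : Type u) [Ring R] {A B : Type u} [AddCommMonoid A] [Module R A]
    [AddCommMonoid B] [Module R B] (f : A →ₗ[R] B) : Prop :=
  ∃ (P : Type u) (_ : AddCommMonoid P) (_ : Module R P) (π : P →ₗ[R] B),
    Module.Projective R P ∧ Function.Surjective π ∧
      HasFinProjDim R (LinearMap.ker (LinearMap.coprod f π))

section Equivariant

variable {k G V W : Type u} [CommRing k] [Group G]
  [AddCommGroup V] [Module k V] [AddCommGroup W] [Module k W]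

/-- A `G`-equivariant `k`-linear map between representations induces a homomorphism of the
corresponding modules over the group algebra `MonoidAlgebra k G`. -/
noncomputable def eqvToModule (ρ : Representation k G V) (σ : Representation k G W)
    (f : V →ₗ[k] W) (hf : ∀ (g : G) (v : V), f (ρ g v) = σ g (f v)) :
    ρ.asModule →ₗ[MonoidAlgebra k G] σ.asModule where
  toFun v := f v
  map_add' := f.map_add
  map_smul' a v := by
    show f (ρ.asAlgebraHom a v) = σ.asAlgebraHom a (f v)
    induction a using MonoidAlgebra.induction_on with
    | of g => simp [Representation.asAlgebraHom_of]; exact hf g v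
    | add a b ha hb =>
      rw [map_add, map_add]
      erw [LinearMap.add_apply, LinearMap.add_apply, map_add, ha, hb]
    | smul r a ha =>
      rw [map_smul, map_smul]
      erw [LinearMap.smul_apply, LinearMap.smul_apply, map_smul, ha]

theorem eval_equivariant (ρ : Representation k G V) (g : G) (v : V) :
    Module.Dual.eval k V (ρ g v) = ρ.dual.dual g (Module.Dual.eval k V v) := by
  ext φ
  simp [Representation.dual_apply, Module.Dual.transpose_apply]

/-- The natural map `M → M**` as a homomorphism of `kG`-modules. -/
noncomputable def evalHomG (ρ : Representation k G V) :
    ρ.asModule →ₗ[MonoidAlgebra k G] ρ.dual.dual.asModule :=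
  eqvToModule ρ ρ.dual.dual (Module.Dual.eval k V) (eval_equivariant ρ)

theorem ev_equivariant (ρ : Representation k G V) (g : G) (z : V ⊗[k] Module.Dual k V) :
    contractRight k V ((ρ.tprod ρ.dual) g z) =
      trivRep k G g (contractRight k V z) := by
  induction z using TensorProduct.induction_on with
  | zero => simp
  | tmul m φ =>
      simp [Representation.tprod_apply, contractRight_apply,
        Representation.dual_apply, Module.Dual.transpose_apply, Representation.trivial_apply,
        ← Module.End.mul_apply, ← map_mul]
  | add x y hx hy => simp only [map_add, hx, hy]

/-- The evaluation map `ev : M ⊗_k M* → k`, `m ⊗ φ ↦ φ m`, as a homomorphism of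
`kG`-modules (where `M ⊗_k M*` carries the diagonal `G`-action and `k` is trivial). -/
noncomputable def evHomG (ρ : Representation k G V) :
    (ρ.tprod ρ.dual).asModule →ₗ[MonoidAlgebra k G] Triv k G where
  toFun z := contractRight k V z
  map_add' := (contractRight k V).map_add
  map_smul' a z := by
    show contractRight k V ((ρ.tprod ρ.dual).asAlgebraHom a z) =
      (trivRep k G).asAlgebraHom a (contractRight k V z)
    induction a using MonoidAlgebra.induction_on with
    | of g => simpa [Representation.asAlgebraHom_of] using ev_equivariant ρ g z
    | add a b ha hb =>
      rw [map_add, map_add]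
      erw [LinearMap.add_apply, LinearMap.add_apply, map_add, ha, hb]
    | smul r a ha =>
      rw [map_smul, map_smul]
      erw [LinearMap.smul_apply, LinearMap.smul_apply, map_smul, ha]

theorem theta_equivariant (ρ : Representation k G V) (g : G) (z : V ⊗[k] Module.Dual k V) :
    ((dualTensorHom k V V).comp (TensorProduct.comm k V (Module.Dual k V)).toLinearMap)
        ((ρ.tprod ρ.dual) g z) =
      (ρ.linHom ρ) g (((dualTensorHom k V V).comp
        (TensorProduct.comm k V (Module.Dual k V)).toLinearMap) z) := by
  induction z using TensorProduct.induction_on with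
  | zero => simp
  | tmul m φ =>
      ext m'
      simp [Representation.tprod_apply, dualTensorHom_apply,
        Representation.dual_apply, Module.Dual.transpose_apply]
  | add x y hx hy => simp only [map_add, hx, hy]

/-- The natural map `θ_M : M ⊗_k M* → End_k M`, `θ (m ⊗ φ) m' = φ m' • m`, as a
homomorphism of `kG`-modules (where `End_k M` carries the conjugation `G`-action). -/
noncomputable def thetaHomG (ρ : Representation k G V) :
    (ρ.tprod ρ.dual).asModule →ₗ[MonoidAlgebra k G] (ρ.linHom ρ).asModule where
  toFun z := ((dualTensorHom k V V).comp
    (TensorProduct.comm k V (Module.Dual k V)).toLinearMap) z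
  map_add' x y := map_add _ x y
  map_smul' a z := by
    show ((dualTensorHom k V V).comp (TensorProduct.comm k V (Module.Dual k V)).toLinearMap)
        ((ρ.tprod ρ.dual).asAlgebraHom a z) =
      (ρ.linHom ρ).asAlgebraHom a (((dualTensorHom k V V).comp
        (TensorProduct.comm k V (Module.Dual k V)).toLinearMap) z)
    induction a using MonoidAlgebra.induction_on with
    | of g => simpa [Representation.asAlgebraHom_of] using theta_equivariant ρ g z
    | add a b ha hb =>
      rw [map_add, map_add]
      erw [LinearMap.add_apply, LinearMap.add_apply, map_add, ha, hb]
    | smul r a ha =>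
      rw [map_smul, map_smul]
      erw [LinearMap.smul_apply, LinearMap.smul_apply, map_smul, ha]

/-- A representation is invertible (endotrivial) if there is a `kG`-module `N` such that
`M ⊗_k N` (with the diagonal `G`-action) is stably isomorphic to the trivial module `k`. -/
def IsInvertibleRep (ρ : Representation k G V) : Prop :=
  ∃ (W' : Type u) (_ : AddCommMonoid W') (_ : Module k W') (σ : Representation k G W'),
    StablyIsomorphic (MonoidAlgebra k G) (ρ.tprod σ).asModule (Triv k G)

end Equivariant

section MapCoeff

variable (k : Type u) [CommRing k] (l : Type u) [CommRing l] (G : Type u) [Group G]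

/-- The ring homomorphism `kG → ℓG` induced by a ring homomorphism `f : k → ℓ`
(applying `f` to the coefficients). -/
noncomputable def mapCoeffRingHom (f : k →+* l) :
    MonoidAlgebra k G →+* MonoidAlgebra l G :=
  letI : Algebra k l := f.toAlgebra
  ((MonoidAlgebra.lift k (MonoidAlgebra l G) G) (MonoidAlgebra.of l G)).toRingHom

end MapCoeff

section BaseChange

variable {k : Type u} [CommRing k] {G : Type u} [Group G]
  {V : Type u} [AddCommGroup V] [Module k V]
  (A : Type u) [CommRing A] [Algebra k A]

/-- The base change `A ⊗_k V` of a representation along `k → A`. -/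
noncomputable def repBaseChange (ρ : Representation k G V) :
    Representation A G (A ⊗[k] V) where
  toFun g := LinearMap.baseChange A (ρ g)
  map_one' := by ext; simp
  map_mul' g h := by ext; simp

end BaseChange

section Generic
variable {R : Type u} [Ring R]

theorem hpd_congr : ∀ (n : ℕ) {M N : Type u} [AddCommMonoid M] [Module R M]
    [AddCommMonoid N] [Module R N], (M ≃ₗ[R] N) → HasProjDimLE R n M → HasProjDimLE R n N
  | 0, M, N, _, _, _, _, e, h => by
      have : Module.Projective R M := h
      exact Module.Projective.of_equiv (R := R) e
  | n+1, M, N, _, _, _, _, e, ⟨P, _, _, f, hP, hf, hk⟩ => by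
      refine ⟨P, _, _, e.toLinearMap.comp f, hP, e.surjective.comp hf, ?_⟩
      have hker : LinearMap.ker (e.toLinearMap.comp f) = LinearMap.ker f := by
        ext x; simp [LinearMap.mem_ker]
      exact hpd_congr n (LinearEquiv.ofEq _ _ hker.symm) hk

theorem hpd_prod : ∀ (n : ℕ) {A B : Type u} [AddCommMonoid A] [Module R A]
    [AddCommMonoid B] [Module R B],
    HasProjDimLE R n A → HasProjDimLE R n B → HasProjDimLE R n (A × B)
  | 0, A, B, _, _, _, _, ha, hb => by
      have : Module.Projective R A := ha
      have : Module.Projective R B := hb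
      exact inferInstanceAs (Module.Projective R (A × B))
  | n+1, A, B, _, _, _, _, ⟨P, _, _, f, hP, hf, hkf⟩, ⟨Q, _, _, g, hQ, hg, hkg⟩ => by
      refine ⟨P × Q, inferInstance, inferInstance, f.prodMap g, ?_, hf.prodMap hg, ?_⟩
      · have := hP; have := hQ; exact inferInstanceAs (Module.Projective R (P × Q))
      · have e : (LinearMap.ker f × LinearMap.ker g) ≃ₗ[R] LinearMap.ker (f.prodMap g) := by
          refine
            { toFun := fun x => ⟨(x.1.1, x.2.1), by
                have h1 := x.1.2; have h2 := x.2.2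
                simp only [LinearMap.mem_ker] at h1 h2 ⊢
                simp [LinearMap.prodMap_apply, h1, h2]⟩
              map_add' := fun x y => rfl
              map_smul' := fun c x => rfl
              invFun := fun x => (⟨x.1.1, by
                  have := x.2; simp only [LinearMap.mem_ker, LinearMap.prodMap_apply,
                    Prod.mk_eq_zero] at this; exact LinearMap.mem_ker.2 this.1⟩,
                ⟨x.1.2, by
                  have := x.2; simp only [LinearMap.mem_ker, LinearMap.prodMap_apply,
                    Prod.mk_eq_zero] at this; exact LinearMap.mem_ker.2 this.2⟩)
              left_inv := fun x => rfl
              right_inv := fun x => rfl }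
        exact hpd_congr n e (hpd_prod n hkf hkg)

theorem hpd_succ : ∀ (n : ℕ) {M : Type u} [AddCommMonoid M] [Module R M],
    HasProjDimLE R n M → HasProjDimLE R (n+1) M
  | 0, M, _, _, h => by
      refine ⟨M, _, _, LinearMap.id, h, Function.surjective_id, ?_⟩
      show Module.Projective R (LinearMap.ker (LinearMap.id : M →ₗ[R] M))
      have : Subsingleton (LinearMap.ker (LinearMap.id : M →ₗ[R] M)) := by
        constructor; rintro ⟨a, ha⟩ ⟨b, hb⟩
        simp only [LinearMap.mem_ker, LinearMap.id_apply] at ha hb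
        simp [Subtype.ext_iff, ha, hb]
      exact ⟨⟨0, fun x => by
        have : x = 0 := Subsingleton.elim x 0
        rw [this, LinearMap.zero_apply, map_zero]⟩⟩
  | n+1, M, _, _, ⟨P, _, _, f, hP, hf, hk⟩ => ⟨P, _, _, f, hP, hf, hpd_succ n hk⟩

theorem hpd_mono {n m : ℕ} (h : n ≤ m) {M : Type u} [AddCommMonoid M] [Module R M]
    (hn : HasProjDimLE R n M) : HasProjDimLE R m M := by
  induction m with
  | zero => exact (Nat.le_zero.1 h) ▸ hn
  | succ m ih =>
      rcases Nat.lt_or_ge n (m+1) with h' | h'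
      · exact hpd_succ m (ih (Nat.lt_succ_iff.1 h'))
      · exact (Nat.le_antisymm h h') ▸ hn

end Generic

section Generic2
variable {R : Type u} [Ring R]

/-- If `π : A → B` is a split surjection, then `A ≃ ker π × B`. -/
noncomputable def splitEquiv {A B : Type u} [AddCommMonoid A] [Module R A]
    [AddCommMonoid B] [Module R B] (π : A →ₗ[R] B) (s : B →ₗ[R] A)
    (hs : ∀ b, π (s b) = b) : A ≃ₗ[R] (LinearMap.ker π × B) := by
  letI : AddCommGroup A := Module.addCommMonoidToAddCommGroup R
  letI : AddCommGroup B := Module.addCommMonoidToAddCommGroup R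
  refine LinearEquiv.ofLinear
    (LinearMap.prod ((LinearMap.id - s.comp π).codRestrict (LinearMap.ker π)
      (fun a => by simp [LinearMap.mem_ker, hs])) π)
    ((LinearMap.ker π).subtype.comp (LinearMap.fst R _ B) + s.comp (LinearMap.snd R _ B))
    ?_ ?_
  · apply LinearMap.ext
    rintro ⟨⟨a, ha⟩, b⟩
    have ha' : π a = 0 := ha
    refine Prod.ext (Subtype.ext ?_) ?_ <;>
      simp [LinearMap.codRestrict, ha', hs]
  · apply LinearMap.ext
    intro a
    simp [LinearMap.codRestrict]

/-- If `π : A → B` is surjective and `B` is projective, then `A ≃ ker π × B`. -/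
theorem equiv_ker_prod {A B : Type u} [AddCommMonoid A] [Module R A]
    [AddCommMonoid B] [Module R B] (π : A →ₗ[R] B) (hπ : Function.Surjective π)
    (hB : Module.Projective R B) : Nonempty (A ≃ₗ[R] (LinearMap.ker π × B)) := by
  obtain ⟨s, hs⟩ := Module.projective_lifting_property π (LinearMap.id : B →ₗ[R] B) hπ
  exact ⟨splitEquiv π s fun b => by
    have := LinearMap.congr_fun hs b; simpa using this⟩

/-- Schanuel's lemma. -/
theorem schanuel {M P Q : Type u} [AddCommMonoid M] [Module R M] [AddCommMonoid P]
    [Module R P] [AddCommMonoid Q] [Module R Q]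
    (hP : Module.Projective R P) (hQ : Module.Projective R Q)
    (f : P →ₗ[R] M) (g : Q →ₗ[R] M) (hf : Function.Surjective f)
    (hg : Function.Surjective g) :
    Nonempty ((LinearMap.ker f × Q) ≃ₗ[R] (LinearMap.ker g × P)) := by
  letI : AddCommGroup M := Module.addCommMonoidToAddCommGroup R
  set h : (P × Q) →ₗ[R] M := f.comp (LinearMap.fst R P Q) - g.comp (LinearMap.snd R P Q)
    with hh
  set X := LinearMap.ker h with hX
  have memX : ∀ x : P × Q, x ∈ X ↔ f x.1 = g x.2 := by
    intro x
    simp only [hX, LinearMap.mem_ker, hh, LinearMap.sub_apply, LinearMap.comp_apply,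
      LinearMap.fst_apply, LinearMap.snd_apply, sub_eq_zero]
  set πP : X →ₗ[R] P := (LinearMap.fst R P Q).comp X.subtype with hπP
  set πQ : X →ₗ[R] Q := (LinearMap.snd R P Q).comp X.subtype with hπQ
  have hπPs : Function.Surjective πP := by
    intro p
    obtain ⟨q, hq⟩ := hg (f p)
    exact ⟨⟨(p, q), (memX (p, q)).2 hq.symm⟩, rfl⟩
  have hπQs : Function.Surjective πQ := by
    intro q
    obtain ⟨p, hp⟩ := hf (g q)
    exact ⟨⟨(p, q), (memX (p, q)).2 hp⟩, rfl⟩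
  have eP : (LinearMap.ker πP) ≃ₗ[R] LinearMap.ker g := by
    refine LinearEquiv.ofLinear
      (LinearMap.codRestrict (LinearMap.ker g)
        ((LinearMap.snd R P Q).comp (X.subtype.comp (LinearMap.ker πP).subtype)) ?_)
      (LinearMap.codRestrict (LinearMap.ker πP)
        (LinearMap.codRestrict X ((LinearMap.inr R P Q).comp (LinearMap.ker g).subtype) ?_) ?_)
      ?_ ?_
    · rintro ⟨⟨⟨p, q⟩, hpq⟩, hx⟩
      have hp : p = 0 := hx
      have := (memX (p, q)).1 hpq
      simp only [LinearMap.mem_ker, LinearMap.comp_apply, LinearMap.snd_apply,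
        Submodule.coe_subtype]
      rw [← this, hp, map_zero]
    · rintro ⟨q, hq⟩
      refine (memX _).2 ?_
      have hq' : g q = 0 := hq
      simp [hq']
    · rintro ⟨q, hq⟩
      show πP _ = 0
      simp [hπP, LinearMap.codRestrict]
    · apply LinearMap.ext; rintro ⟨q, hq⟩
      refine Subtype.ext ?_
      simp [LinearMap.codRestrict]
    · apply LinearMap.ext; rintro ⟨⟨⟨p, q⟩, hpq⟩, hx⟩
      have hp : p = 0 := hx
      refine Subtype.ext (Subtype.ext (Prod.ext ?_ ?_)) <;>
        simp [LinearMap.codRestrict, hp]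
  have eQ : (LinearMap.ker πQ) ≃ₗ[R] LinearMap.ker f := by
    refine LinearEquiv.ofLinear
      (LinearMap.codRestrict (LinearMap.ker f)
        ((LinearMap.fst R P Q).comp (X.subtype.comp (LinearMap.ker πQ).subtype)) ?_)
      (LinearMap.codRestrict (LinearMap.ker πQ)
        (LinearMap.codRestrict X ((LinearMap.inl R P Q).comp (LinearMap.ker f).subtype) ?_) ?_)
      ?_ ?_
    · rintro ⟨⟨⟨p, q⟩, hpq⟩, hx⟩
      have hq : q = 0 := hx
      have := (memX (p, q)).1 hpq
      simp only [LinearMap.mem_ker, LinearMap.comp_apply, LinearMap.fst_apply,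
        Submodule.coe_subtype]
      rw [this, hq, map_zero]
    · rintro ⟨p, hp⟩
      refine (memX _).2 ?_
      have hp' : f p = 0 := hp
      simp [hp']
    · rintro ⟨p, hp⟩
      show πQ _ = 0
      simp [hπQ, LinearMap.codRestrict]
    · apply LinearMap.ext; rintro ⟨p, hp⟩
      refine Subtype.ext ?_
      simp [LinearMap.codRestrict]
    · apply LinearMap.ext; rintro ⟨⟨⟨p, q⟩, hpq⟩, hx⟩
      have hq : q = 0 := hx
      refine Subtype.ext (Subtype.ext (Prod.ext ?_ ?_)) <;>
        simp [LinearMap.codRestrict, hq]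
  obtain ⟨e1⟩ := equiv_ker_prod πP hπPs hP
  obtain ⟨e2⟩ := equiv_ker_prod πQ hπQs hQ
  exact ⟨((e2.trans (eQ.prodCongr (LinearEquiv.refl R Q))).symm).trans
    (e1.trans (eP.prodCongr (LinearEquiv.refl R P)))⟩

end Generic2

section Generic3
variable {R : Type u} [Ring R]

/-- Cancellation of a projective factor. -/
theorem hpd_cancel_proj (n : ℕ) {A P : Type u} [AddCommMonoid A] [Module R A]
    [AddCommMonoid P] [Module R P] (hP : Module.Projective R P)
    (h : HasProjDimLE R n (A × P)) : HasProjDimLE R n A := by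
  cases n with
  | zero =>
      have : Module.Projective R (A × P) := h
      exact Module.Projective.of_split (LinearMap.inl R A P) (LinearMap.fst R A P) (by ext <;> rfl)
  | succ n =>
      obtain ⟨P₀, _, _, f, hP₀, hf, hk⟩ := h
      refine ⟨P₀, _, _, (LinearMap.fst R A P).comp f, hP₀,
        (Prod.fst_surjective).comp hf, ?_⟩
      set f₁ := (LinearMap.fst R A P).comp f with hf₁
      set β : LinearMap.ker f₁ →ₗ[R] P :=
        (LinearMap.snd R A P).comp (f.comp (LinearMap.ker f₁).subtype) with hβ
      have hβs : Function.Surjective β := by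
        intro p
        obtain ⟨x, hx⟩ := hf (0, p)
        refine ⟨⟨x, ?_⟩, ?_⟩
        · show (LinearMap.fst R A P) (f x) = 0
          rw [hx]; rfl
        · show (f x).2 = p
          rw [hx]
      obtain ⟨e1⟩ := equiv_ker_prod β hβs hP
      have eker : (LinearMap.ker β) ≃ₗ[R] LinearMap.ker f := by
        refine LinearEquiv.ofLinear
          (LinearMap.codRestrict (LinearMap.ker f)
            ((LinearMap.ker f₁).subtype.comp (LinearMap.ker β).subtype) ?_)
          (LinearMap.codRestrict (LinearMap.ker β)
            (LinearMap.codRestrict (LinearMap.ker f₁) (LinearMap.ker f).subtype ?_) ?_)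
          ?_ ?_
        · rintro ⟨⟨x, hx1⟩, hx2⟩
          have h1 : (f x).1 = 0 := hx1
          have h2 : (f x).2 = 0 := hx2
          simp only [LinearMap.mem_ker, LinearMap.comp_apply, Submodule.coe_subtype]
          exact Prod.ext h1 h2
        · rintro ⟨x, hx⟩
          have : f x = 0 := hx
          show (LinearMap.fst R A P) (f x) = 0
          rw [this]; rfl
        · rintro ⟨x, hx⟩
          have : f x = 0 := hx
          show (LinearMap.snd R A P) (f _) = 0
          simp only [LinearMap.codRestrict]
          show (f x).2 = 0
          rw [this]; rfl
        · apply LinearMap.ext; rintro ⟨x, hx⟩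
          exact Subtype.ext rfl
        · apply LinearMap.ext; rintro ⟨⟨x, hx1⟩, hx2⟩
          exact Subtype.ext (Subtype.ext rfl)
      have : HasProjDimLE R n (LinearMap.ker f × P) := by
        refine hpd_prod n hk (hpd_mono (Nat.zero_le n) ?_)
        show HasProjDimLE R 0 P
        exact hP
      have h2 : HasProjDimLE R n ((LinearMap.ker β) × P) :=
        hpd_congr n ((eker.prodCongr (LinearEquiv.refl R P)).symm) this
      exact hpd_congr n e1.symm h2

/-- Kernel shifting: if `pd M ≤ n+1` and `g : Q ↠ M` with `Q` projective,
then `pd (ker g) ≤ n`. -/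
theorem hpd_ker_shift (n : ℕ) {M Q : Type u} [AddCommMonoid M] [Module R M]
    [AddCommMonoid Q] [Module R Q] (hQ : Module.Projective R Q) (g : Q →ₗ[R] M)
    (hg : Function.Surjective g) (h : HasProjDimLE R (n+1) M) :
    HasProjDimLE R n (LinearMap.ker g) := by
  obtain ⟨P, _, _, f, hP, hf, hk⟩ := h
  obtain ⟨e⟩ := schanuel hP hQ f g hf hg
  have h1 : HasProjDimLE R n (LinearMap.ker f × Q) :=
    hpd_prod n hk (hpd_mono (Nat.zero_le n) (show HasProjDimLE R 0 Q from hQ))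
  have h2 : HasProjDimLE R n (LinearMap.ker g × P) := hpd_congr n e h1
  exact hpd_cancel_proj n hP h2

/-- A direct summand inherits projective dimension bounds. -/
theorem hpd_summand : ∀ (n : ℕ) {C M : Type u} [AddCommMonoid C] [Module R C]
    [AddCommMonoid M] [Module R M] (i : C →ₗ[R] M) (p : M →ₗ[R] C),
    (∀ c, p (i c) = c) → HasProjDimLE R n M → HasProjDimLE R n C
  | 0, C, M, _, _, _, _, i, p, hpi, h => by
      have : Module.Projective R M := h
      exact Module.Projective.of_split i p (LinearMap.ext hpi)
  | n+1, C, M, _, _, _, _, i, p, hpi, h => by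
      -- free surjections onto C and D := ker p
      set D := LinearMap.ker p with hD
      -- M ≃ C × D
      letI : AddCommGroup M := Module.addCommMonoidToAddCommGroup R
      letI : AddCommGroup C := Module.addCommMonoidToAddCommGroup R
      have e : M ≃ₗ[R] (LinearMap.ker p × C) := splitEquiv p i hpi
      have hCD : HasProjDimLE R (n+1) (LinearMap.ker p × C) := hpd_congr (n+1) e h
      -- free surjections
      set qC : (C →₀ R) →ₗ[R] C := Finsupp.linearCombination R _root_.id with hqC
      have hqCs : Function.Surjective qC :=
        Finsupp.linearCombination_surjective R Function.surjective_id
      set qD : (D →₀ R) →ₗ[R] D := Finsupp.linearCombination R _root_.id with hqD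
      have hqDs : Function.Surjective qD :=
        Finsupp.linearCombination_surjective R Function.surjective_id
      have hprodsurj : Function.Surjective (qD.prodMap qC) := hqDs.prodMap hqCs
      have hkprod : HasProjDimLE R n (LinearMap.ker (qD.prodMap qC)) := by
        refine hpd_ker_shift n ?_ (qD.prodMap qC) hprodsurj hCD
        exact inferInstanceAs (Module.Projective R ((D →₀ R) × (C →₀ R)))
      -- ker (qD.prodMap qC) ≃ ker qD × ker qC
      have ek : (LinearMap.ker qD × LinearMap.ker qC) ≃ₗ[R] LinearMap.ker (qD.prodMap qC) := by
        refine LinearEquiv.ofLinear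
          (LinearMap.codRestrict _
            ((LinearMap.ker qD).subtype.prodMap (LinearMap.ker qC).subtype) ?_)
          (LinearMap.prod
            (LinearMap.codRestrict _
              ((LinearMap.fst R _ _).comp (LinearMap.ker (qD.prodMap qC)).subtype) ?_)
            (LinearMap.codRestrict _
              ((LinearMap.snd R _ _).comp (LinearMap.ker (qD.prodMap qC)).subtype) ?_)) ?_ ?_
        · rintro ⟨⟨x, hx⟩, ⟨y, hy⟩⟩
          have hx' : qD x = 0 := hx
          have hy' : qC y = 0 := hy
          show (qD.prodMap qC) (x, y) = 0
          simp [LinearMap.prodMap_apply, hx', hy', Prod.ext_iff]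
        · rintro ⟨⟨x, y⟩, hxy⟩
          have : (qD.prodMap qC) (x, y) = 0 := hxy
          have : qD x = 0 := by
            simpa using congrArg Prod.fst this
          exact this
        · rintro ⟨⟨x, y⟩, hxy⟩
          have : (qD.prodMap qC) (x, y) = 0 := hxy
          have : qC y = 0 := by
            simpa using congrArg Prod.snd this
          exact this
        · apply LinearMap.ext; rintro ⟨⟨x, y⟩, hxy⟩
          exact Subtype.ext rfl
        · apply LinearMap.ext; rintro ⟨⟨x, hx⟩, ⟨y, hy⟩⟩
          exact Prod.ext (Subtype.ext rfl) (Subtype.ext rfl)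
      have hkk : HasProjDimLE R n (LinearMap.ker qD × LinearMap.ker qC) :=
        hpd_congr n ek.symm hkprod
      have hkerqC : HasProjDimLE R n (LinearMap.ker qC) :=
        hpd_summand n (LinearMap.inr R _ _)
          (LinearMap.snd R (LinearMap.ker qD) (LinearMap.ker qC)) (fun c => rfl) hkk
      exact ⟨C →₀ R, _, _, qC, inferInstanceAs (Module.Projective R (C →₀ R)), hqCs, hkerqC⟩

end Generic3

section Restrict
variable {S R : Type u} [Ring S] [Ring R] (φ : S →+* R)

theorem proj_instEq {M : Type u} [AddCommMonoid M] (i1 i2 : Module S M) (h : i1 = i2)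
    (hp : @Module.Projective S _ M _ i1) : @Module.Projective S _ M _ i2 := h ▸ hp

theorem hpd_instEq (n : ℕ) {M : Type u} [AddCommMonoid M] (i1 i2 : Module S M) (h : i1 = i2)
    (hp : @HasProjDimLE S _ n M _ i1) : @HasProjDimLE S _ n M _ i2 := h ▸ hp

/-- Restriction of scalars of a linear map along `φ`. -/
noncomputable def resMap {A B : Type u} [AddCommMonoid A] [Module R A]
    [AddCommMonoid B] [Module R B] (f : A →ₗ[R] B) :
    @LinearMap S S _ _ (RingHom.id S) A B _ _ (Module.compHom A φ) (Module.compHom B φ) :=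
  letI := Module.compHom A φ
  letI := Module.compHom B φ
  { toFun := f
    map_add' := f.map_add
    map_smul' := fun c a => f.map_smul (φ c) a }

@[simp] theorem resMap_apply {A B : Type u} [AddCommMonoid A] [Module R A]
    [AddCommMonoid B] [Module R B] (f : A →ₗ[R] B) (a : A) : resMap φ f a = f a := rfl

/-- The kernel of the restricted map is the restriction of the kernel. -/
noncomputable def resKerEquiv {A B : Type u} [AddCommMonoid A] [Module R A]
    [AddCommMonoid B] [Module R B] (f : A →ₗ[R] B) :
    letI := Module.compHom A φ
    letI := Module.compHom B φ
    letI := Module.compHom (LinearMap.ker f) φ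
    (LinearMap.ker f) ≃ₗ[S] LinearMap.ker (resMap φ f) :=
  letI := Module.compHom A φ
  letI := Module.compHom B φ
  letI := Module.compHom (LinearMap.ker f) φ
  { toFun := fun x => ⟨x.1, x.2⟩
    map_add' := fun x y => rfl
    map_smul' := fun c x => rfl
    invFun := fun x => ⟨x.1, x.2⟩
    left_inv := fun x => rfl
    right_inv := fun x => rfl }

/-- If `R` is projective as an `S`-module, then restriction of scalars preserves
projectivity. -/
theorem proj_res (hR : @Module.Projective S _ R _ (Module.compHom R φ))
    {M : Type u} [AddCommMonoid M] [Module R M] (h : Module.Projective R M) :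
    @Module.Projective S _ M _ (Module.compHom M φ) := by
  letI := Module.compHom M φ
  letI := Module.compHom R φ
  letI := Module.compHom (M →₀ R) φ
  obtain ⟨s, hs⟩ := h.out
  -- (M →₀ R) is S-projective
  have hfree : Module.Projective S (M →₀ R) := by
    have hinst : (Finsupp.module M R : Module S (M →₀ R)) = Module.compHom (M →₀ R) φ := by
      refine Module.ext' _ _ fun c u => ?_
      ext a
      rfl
    refine proj_instEq _ _ hinst ?_
    classical
    have : Module.Projective S (Π₀ _ : M, R) := inferInstance
    exact Module.Projective.of_equiv (finsuppLequivDFinsupp S).symm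
  refine Module.Projective.of_split (resMap φ s)
    (resMap φ (Finsupp.linearCombination R _root_.id)) ?_
  apply LinearMap.ext
  intro m
  simpa using hs m

/-- `HasProjDimLE` descends along restriction of scalars when `R` is `S`-projective. -/
theorem hpd_res (hR : @Module.Projective S _ R _ (Module.compHom R φ)) :
    ∀ (n : ℕ) {M : Type u} [AddCommMonoid M] [Module R M],
    HasProjDimLE R n M → @HasProjDimLE S _ n M _ (Module.compHom M φ)
  | 0, M, _, _, h => proj_res φ hR h
  | n+1, M, _, _, ⟨P, _, _, f, hP, hf, hk⟩ => by
      letI := Module.compHom M φ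
      letI := Module.compHom P φ
      letI := Module.compHom (LinearMap.ker f) φ
      refine ⟨P, _, _, resMap φ f, proj_res φ hR hP, hf, ?_⟩
      exact hpd_congr n (resKerEquiv φ f) (hpd_res hR n hk)

end Restrict

section Syzygy
variable {S R : Type u} [Ring S] [Ring R]

theorem syzygy_lemma (φ : S →+* R) (hR : @Module.Projective S _ R _ (Module.compHom R φ))
    (d : ℕ)
    (hglob : ∀ (M : Type u) (_ : AddCommMonoid M) (_ : Module S M), HasProjDimLE S d M) :
    ∀ (j : ℕ) (M : Type u) (_ : AddCommMonoid M) (_ : Module R M),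
    ∃ (K : Type u) (_ : AddCommMonoid K) (_ : Module R K),
      (∀ m, HasProjDimLE R (m + j) M → HasProjDimLE R m K) ∧
      (∀ n, HasProjDimLE R n K → HasProjDimLE R (n + j) M) ∧
      @HasProjDimLE S _ (d - j) K _ (Module.compHom K φ)
  | 0, M, _, _ => by
      refine ⟨M, _, _, fun m h => by simpa using h, fun n h => by simpa using h, ?_⟩
      simpa using hglob M _ (Module.compHom M φ)
  | j+1, M, _, _ => by
      obtain ⟨K, _, _, h1, h2, h3⟩ := syzygy_lemma φ hR d hglob j M _ _
      set t : (K →₀ R) →ₗ[R] K := Finsupp.linearCombination R _root_.id with ht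
      have hts : Function.Surjective t :=
        Finsupp.linearCombination_surjective R Function.surjective_id
      have hfp : Module.Projective R (K →₀ R) := inferInstance
      refine ⟨LinearMap.ker t, inferInstance, inferInstance, ?_, ?_, ?_⟩
      · intro m hm
        have : HasProjDimLE R (m + 1) K := h1 (m+1) (by
          have : m + 1 + j = m + (j + 1) := by omega
          rw [this]; exact hm)
        exact hpd_ker_shift m hfp t hts this
      · intro n hn
        have : HasProjDimLE R (n + 1) K := ⟨K →₀ R, _, _, t, hfp, hts, hn⟩
        have := h2 (n+1) this
        have harith : n + 1 + j = n + (j + 1) := by omega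
        rwa [harith] at this
      · letI := Module.compHom K φ
        letI := Module.compHom (K →₀ R) φ
        letI := Module.compHom (LinearMap.ker t) φ
        have hK : HasProjDimLE S ((d - (j+1)) + 1) K := by
          refine hpd_mono ?_ h3
          omega
        have hQ : Module.Projective S (K →₀ R) := proj_res φ hR hfp
        have := hpd_ker_shift (R := S) (d - (j+1)) hQ (resMap φ t) hts hK
        exact hpd_congr _ (resKerEquiv φ t).symm this

end Syzygy

section GroupAlg
variable {k : Type u} [CommRing k] {F : Type u} [Group F] [Finite F]

theorem MA_add_apply (a b : MonoidAlgebra k F) (y : F) :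
    (a + b).coeff y = a.coeff y + b.coeff y :=
  Finsupp.add_apply a.coeff b.coeff y

theorem finsum_single [Fintype F] (v : MonoidAlgebra k F) :
    (∑ g : F, (MonoidAlgebra.single g (v.coeff g) : MonoidAlgebra k F)) = v := by
  classical
  refine MonoidAlgebra.ext (Finsupp.ext fun y => ?_)
  rw [MonoidAlgebra.coeff_sum, Finsupp.finset_sum_apply]
  rw [Finset.sum_congr rfl fun g _ =>
    MonoidAlgebra.coeff_single_apply (a := g) (a' := y) (b := v.coeff g)]
  rw [Finset.sum_ite_eq' Finset.univ y (fun g => v.coeff g)]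
  rw [if_pos (Finset.mem_univ y)]

variable {X E : Type u} [AddCommMonoid E] [Module (MonoidAlgebra k F) E]

/-- `u ↦ δ_g ⊗ (coefficient of 1)` on the free module `X →₀ Λ`. -/
noncomputable def mapR (g : F) :
    (X →₀ MonoidAlgebra k F) → (X →₀ MonoidAlgebra k F) :=
  Finsupp.mapRange (fun a => MonoidAlgebra.single g (a.coeff 1)) (by simp)

theorem mapR_add (g : F) (u v : X →₀ MonoidAlgebra k F) :
    mapR g (u + v) = mapR g u + mapR g v := by
  refine Finsupp.ext fun x => ?_
  simp only [mapR, Finsupp.mapRange_apply, Finsupp.add_apply]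
  rw [MA_add_apply, MonoidAlgebra.single_add]

theorem smul_mapR (h g : F) (u : X →₀ MonoidAlgebra k F) :
    (MonoidAlgebra.single h (1:k) : MonoidAlgebra k F) • mapR g u = mapR (h * g) u := by
  refine Finsupp.ext fun x => ?_
  simp only [Finsupp.smul_apply, mapR, Finsupp.mapRange_apply, smul_eq_mul,
    MonoidAlgebra.single_mul_single, one_mul]

theorem mapR_alg (c : k) (g : F) (u : X →₀ MonoidAlgebra k F) :
    mapR (X := X) g (algebraMap k (MonoidAlgebra k F) c • u)
      = algebraMap k (MonoidAlgebra k F) c • mapR g u := by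
  refine Finsupp.ext fun x => ?_
  simp only [Finsupp.smul_apply, mapR, Finsupp.mapRange_apply, smul_eq_mul]
  rw [show (algebraMap k (MonoidAlgebra k F) c) = MonoidAlgebra.single (1:F) c from rfl,
    MonoidAlgebra.single_one_mul_apply, MonoidAlgebra.single_mul_single, one_mul]

variable [Fintype F]

/-- Averaging construction producing a `Λ`-linear map from a `k`-linear one. -/
noncomputable def hatFun (r : E → (X →₀ MonoidAlgebra k F)) (e : E) :
    X →₀ MonoidAlgebra k F :=
  ∑ g : F, mapR g (r ((MonoidAlgebra.single (g⁻¹ : F) (1:k) : MonoidAlgebra k F) • e))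

theorem hat_add (r : E → (X →₀ MonoidAlgebra k F))
    (radd : ∀ e1 e2, r (e1 + e2) = r e1 + r e2)
    (e1 e2 : E) : hatFun r (e1 + e2) = hatFun r e1 + hatFun r e2 := by
  rw [hatFun, hatFun, hatFun, ← Finset.sum_add_distrib]
  refine Finset.sum_congr rfl fun g _ => ?_
  rw [smul_add, radd, mapR_add]

theorem hat_alg (r : E → (X →₀ MonoidAlgebra k F))
    (ralg : ∀ (c : k) e, r (algebraMap k (MonoidAlgebra k F) c • e)
      = algebraMap k (MonoidAlgebra k F) c • r e)
    (c : k) (e : E) : hatFun r (algebraMap k (MonoidAlgebra k F) c • e)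
      = algebraMap k (MonoidAlgebra k F) c • hatFun r e := by
  rw [hatFun, hatFun, Finset.smul_sum]
  refine Finset.sum_congr rfl fun g _ => ?_
  rw [smul_smul, ← Algebra.commutes c, ← smul_smul, ralg, mapR_alg]

theorem hat_group (r : E → (X →₀ MonoidAlgebra k F)) (h : F) (e : E) :
    hatFun r ((MonoidAlgebra.single h (1:k) : MonoidAlgebra k F) • e)
      = (MonoidAlgebra.single h (1:k) : MonoidAlgebra k F) • hatFun r e := by
  rw [hatFun, hatFun, Finset.smul_sum]
  refine (Fintype.sum_equiv (Equiv.mulLeft h) _ _ fun y => ?_).symm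
  rw [smul_mapR, smul_smul, MonoidAlgebra.single_mul_single, one_mul]
  have h1 : (Equiv.mulLeft h) y = h * y := rfl
  have h2 : ((h * y)⁻¹ * h : F) = y⁻¹ := by
    rw [mul_inv_rev]
    simp [mul_assoc]
  rw [h1, h2]

theorem hat_section (r : E → (X →₀ MonoidAlgebra k F))
    (i : (X →₀ MonoidAlgebra k F) →ₗ[MonoidAlgebra k F] E)
    (hri : ∀ u, r (i u) = u) (u : X →₀ MonoidAlgebra k F) : hatFun r (i u) = u := by
  rw [hatFun]
  have step : ∀ g : F, mapR (X := X) g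
      (r ((MonoidAlgebra.single (g⁻¹ : F) (1:k) : MonoidAlgebra k F) • i u))
      = mapR g ((MonoidAlgebra.single (g⁻¹ : F) (1:k) : MonoidAlgebra k F) • u) := by
    intro g
    rw [← map_smul, hri]
  rw [Finset.sum_congr rfl fun g _ => step g]
  refine Finsupp.ext fun x => ?_
  rw [Finsupp.finset_sum_apply]
  have term : ∀ g : F,
      (mapR (X := X) g ((MonoidAlgebra.single (g⁻¹ : F) (1:k) : MonoidAlgebra k F) • u)) x
      = MonoidAlgebra.single g ((u x).coeff g) := by
    intro g
    simp only [mapR, Finsupp.mapRange_apply, Finsupp.smul_apply, smul_eq_mul]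
    rw [MonoidAlgebra.single_mul_apply]
    simp
  rw [Finset.sum_congr rfl fun g _ => term g]
  exact finsum_single (u x)

/-- The `Λ`-linear map produced by averaging. -/
noncomputable def hatMap (r : E → (X →₀ MonoidAlgebra k F))
    (radd : ∀ e1 e2, r (e1 + e2) = r e1 + r e2)
    (ralg : ∀ (c : k) e, r (algebraMap k (MonoidAlgebra k F) c • e)
      = algebraMap k (MonoidAlgebra k F) c • r e) :
    E →ₗ[MonoidAlgebra k F] (X →₀ MonoidAlgebra k F) where
  toFun := hatFun r
  map_add' := hat_add r radd
  map_smul' := by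
    intro a e
    simp only [RingHom.id_apply]
    induction a using MonoidAlgebra.induction_on with
    | of g => exact hat_group r g e
    | add a b ha hb => rw [add_smul, hat_add r radd, ha, hb, add_smul]
    | smul c a ha =>
        rw [Algebra.smul_def, mul_smul, hat_alg r ralg, ha, ← mul_smul, ← Algebra.smul_def]

end GroupAlg

section CoreLemmas
variable {k : Type u} [CommRing k] {F : Type u} [Group F] [Finite F] [Fintype F]

/-- Splitting lemma: a surjection of `kF`-modules whose kernel is the image of an
embedded free module splits provided the target is `k`-projective. -/
theorem lemmaB0 {E N : Type u} [AddCommMonoid E] [Module (MonoidAlgebra k F) E]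
    [AddCommMonoid N] [Module (MonoidAlgebra k F) N]
    (f : E →ₗ[MonoidAlgebra k F] N) (hf : Function.Surjective f) (X : Type u)
    (i : (X →₀ MonoidAlgebra k F) →ₗ[MonoidAlgebra k F] E) (hinj : Function.Injective i)
    (hrange : ∀ e, f e = 0 ↔ ∃ u, i u = e)
    (hN : @Module.Projective k _ N _ (Module.compHom N (algebraMap k (MonoidAlgebra k F)))) :
    ∃ σ : N →ₗ[MonoidAlgebra k F] E, ∀ nn, f (σ nn) = nn := by
  letI : AddCommGroup E := Module.addCommMonoidToAddCommGroup (MonoidAlgebra k F)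
  letI : AddCommGroup N := Module.addCommMonoidToAddCommGroup (MonoidAlgebra k F)
  letI : AddCommGroup (X →₀ MonoidAlgebra k F) :=
    Module.addCommMonoidToAddCommGroup (MonoidAlgebra k F)
  letI := Module.compHom E (algebraMap k (MonoidAlgebra k F))
  letI := Module.compHom N (algebraMap k (MonoidAlgebra k F))
  haveI := hN
  obtain ⟨s, hs⟩ := Module.projective_lifting_property
    (resMap (algebraMap k (MonoidAlgebra k F)) f) LinearMap.id hf
  have hssec : ∀ nn, f (s nn) = nn := fun nn => LinearMap.congr_fun hs nn
  have smulN : ∀ (c : k) (m : N), (algebraMap k (MonoidAlgebra k F) c) • m = c • m :=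
    fun _ _ => rfl
  have smulE : ∀ (c : k) (m : E), (algebraMap k (MonoidAlgebra k F) c) • m = c • m :=
    fun _ _ => rfl
  have hex : ∀ e : E, ∃ u, i u = e - s (f e) := by
    intro e
    refine (hrange _).1 ?_
    rw [map_sub, hssec, sub_self]
  set r : E → (X →₀ MonoidAlgebra k F) := fun e => Classical.choose (hex e) with hr
  have hri : ∀ e, i (r e) = e - s (f e) := fun e => Classical.choose_spec (hex e)
  have hfi : ∀ u, f (i u) = 0 := fun u => (hrange (i u)).2 ⟨u, rfl⟩
  have hriu : ∀ u, r (i u) = u := by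
    intro u
    apply hinj
    rw [hri, hfi, map_zero, sub_zero]
  have radd : ∀ e1 e2, r (e1 + e2) = r e1 + r e2 := by
    intro e1 e2
    apply hinj
    rw [map_add, hri, hri, hri, map_add, map_add]
    abel
  have ralg : ∀ (c : k) e, r (algebraMap k (MonoidAlgebra k F) c • e)
      = algebraMap k (MonoidAlgebra k F) c • r e := by
    intro c e
    apply hinj
    rw [map_smul, hri, hri, map_smul, smul_sub]
    congr 1
    rw [smulN, smulE]
    exact s.map_smul c (f e)
  set rh := hatMap r radd ralg with hrh
  have hsec : ∀ u, rh (i u) = u := fun u => hat_section r i hriu u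
  set σ₀ : N → E := fun nn => s nn - i (rh (s nn)) with hσ₀
  have fσ : ∀ nn, f (σ₀ nn) = nn := by
    intro nn
    rw [hσ₀]
    simp only [map_sub, hssec, hfi, sub_zero]
  have key : ∀ w : E, f w = 0 → i (rh w) = w := by
    intro w hw
    obtain ⟨u, hu⟩ := (hrange w).1 hw
    rw [← hu, hsec]
  refine ⟨{ toFun := σ₀, map_add' := ?_, map_smul' := ?_ }, fσ⟩
  · intro n1 n2
    rw [hσ₀]
    simp only
    set w := s (n1 + n2) - s n1 - s n2 with hwdef
    have hw : f w = 0 := by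
      rw [hwdef, map_sub, map_sub, hssec, hssec, hssec]
      abel
    have hkey := key w hw
    have hs' : s (n1 + n2) = s n1 + s n2 + w := by rw [hwdef]; abel
    rw [hs', map_add, map_add, map_add, map_add, hkey]
    abel
  · intro a nn
    simp only [RingHom.id_apply]
    rw [hσ₀]
    simp only
    set w := s (a • nn) - a • s nn with hwdef
    have hw : f w = 0 := by
      rw [hwdef, map_sub, f.map_smul, hssec, hssec, sub_self]
    have hkey := key w hw
    have hs' : s (a • nn) = a • s nn + w := by rw [hwdef]; abel
    rw [hs', map_add, map_add, map_smul, map_smul, hkey, smul_sub]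
    abel

/-- Abstract form of the splitting lemma: projective kernel instead of free. -/
theorem lemmaB' {E N K : Type u} [AddCommMonoid E] [Module (MonoidAlgebra k F) E]
    [AddCommMonoid N] [Module (MonoidAlgebra k F) N]
    [AddCommMonoid K] [Module (MonoidAlgebra k F) K]
    (f : E →ₗ[MonoidAlgebra k F] N) (hf : Function.Surjective f)
    (ι : K →ₗ[MonoidAlgebra k F] E) (hι : Function.Injective ι)
    (hrange : ∀ e, f e = 0 ↔ ∃ x, ι x = e)
    (hK : Module.Projective (MonoidAlgebra k F) K)
    (hN : @Module.Projective k _ N _ (Module.compHom N (algebraMap k (MonoidAlgebra k F)))) :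
    ∃ σ : N →ₗ[MonoidAlgebra k F] E, ∀ nn, f (σ nn) = nn := by
  classical
  letI : AddCommGroup K := Module.addCommMonoidToAddCommGroup (MonoidAlgebra k F)
  obtain ⟨s0, hs0⟩ := Module.projective_def.mp hK
  have hτs0 : ∀ x : K,
      Finsupp.linearCombination (MonoidAlgebra k F) (_root_.id : K → K) (s0 x) = x :=
    fun x => hs0 x
  -- notation
  refine ?_
  set τ : (K →₀ MonoidAlgebra k F) →ₗ[MonoidAlgebra k F] K :=
    Finsupp.linearCombination (MonoidAlgebra k F) _root_.id with hτ
  set f' : (E × LinearMap.ker τ) →ₗ[MonoidAlgebra k F] N :=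
    f.comp (LinearMap.fst _ _ _) with hf'
  have hsub : ∀ u : K →₀ MonoidAlgebra k F,
      ((LinearMap.id : (K →₀ MonoidAlgebra k F) →ₗ[MonoidAlgebra k F] _) - s0.comp τ) u
        ∈ LinearMap.ker τ := by
    intro u
    rw [LinearMap.mem_ker, LinearMap.sub_apply, LinearMap.id_apply, LinearMap.comp_apply,
      τ.map_sub, hτs0, sub_self]
  set j : (K →₀ MonoidAlgebra k F) →ₗ[MonoidAlgebra k F] (E × LinearMap.ker τ) :=
    (ι.comp τ).prod
      (((LinearMap.id : (K →₀ MonoidAlgebra k F) →ₗ[MonoidAlgebra k F] _) - s0.comp τ).codRestrict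
        (LinearMap.ker τ) hsub) with hj
  have hjapp1 : ∀ u, (j u).1 = ι (τ u) := fun u => rfl
  have hjapp2 : ∀ u, ((j u).2 : K →₀ MonoidAlgebra k F) = u - s0 (τ u) := by
    intro u
    show (((LinearMap.id : (K →₀ MonoidAlgebra k F) →ₗ[MonoidAlgebra k F] _)
      - s0.comp τ).codRestrict (LinearMap.ker τ) hsub u : K →₀ MonoidAlgebra k F)
      = u - s0 (τ u)
    rw [LinearMap.codRestrict_apply, LinearMap.sub_apply, LinearMap.id_apply,
      LinearMap.comp_apply]
  have hf's : Function.Surjective f' := by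
    intro nn
    obtain ⟨e, he⟩ := hf nn
    exact ⟨(e, 0), he⟩
  have hjinj : Function.Injective j := by
    intro u v huv
    have h1 : τ u = τ v := by
      apply hι
      rw [← hjapp1, ← hjapp1, huv]
    have h2 : u - s0 (τ u) = v - s0 (τ v) := by
      rw [← hjapp2, ← hjapp2, huv]
    rw [h1] at h2
    have := congrArg (fun z => z + s0 (τ v)) h2
    simpa using this
  have hjrange : ∀ e', f' e' = 0 ↔ ∃ u, j u = e' := by
    intro e'
    constructor
    · intro he'
      obtain ⟨e, w⟩ := e'
      have he : f e = 0 := he'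
      obtain ⟨x, hx⟩ := (hrange e).1 he
      refine ⟨s0 x + w.1, ?_⟩
      have hτu : τ (s0 x + w.1) = x := by
        have hw : τ w.1 = 0 := w.2
        rw [τ.map_add, hτs0, hw, add_zero]
      refine Prod.ext ?_ (Subtype.ext ?_)
      · rw [hjapp1, hτu, hx]
      · rw [hjapp2, hτu]
        show s0 x + w.1 - s0 x = w.1
        abel
    · rintro ⟨u, rfl⟩
      show f ((j u).1) = 0
      rw [hjapp1]
      exact (hrange (ι (τ u))).2 ⟨τ u, rfl⟩
  obtain ⟨σ', hσ'⟩ := lemmaB0 f' hf's K j hjinj hjrange hN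
  exact ⟨(LinearMap.fst _ _ _).comp σ', fun nn => hσ' nn⟩

/-- A surjection of `kF`-modules from a projective module, with projective kernel and
`k`-projective target, splits; hence the target is projective. -/
theorem lemmaB {E N : Type u} [AddCommMonoid E] [Module (MonoidAlgebra k F) E]
    [AddCommMonoid N] [Module (MonoidAlgebra k F) N]
    (hE : Module.Projective (MonoidAlgebra k F) E)
    (f : E →ₗ[MonoidAlgebra k F] N) (hf : Function.Surjective f)
    (hker : Module.Projective (MonoidAlgebra k F) (LinearMap.ker f))
    (hN : @Module.Projective k _ N _ (Module.compHom N (algebraMap k (MonoidAlgebra k F)))) :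
    Module.Projective (MonoidAlgebra k F) N := by
  obtain ⟨σ, hσ⟩ := lemmaB' f hf (LinearMap.ker f).subtype (LinearMap.ker f).injective_subtype
    (fun e => ⟨fun he => ⟨⟨e, he⟩, rfl⟩, by rintro ⟨x, rfl⟩; exact x.2⟩) hker hN
  exact Module.Projective.of_split σ f (LinearMap.ext fun nn => hσ nn)

end CoreLemmas

section GroupAlgProj
variable {k : Type u} [CommRing k] {F : Type u} [Monoid F]

theorem groupAlgebra_k_proj :
    @Module.Projective k _ (MonoidAlgebra k F) _
      (Module.compHom (MonoidAlgebra k F) (algebraMap k (MonoidAlgebra k F))) := by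
  have hcanon : Module.Projective k (MonoidAlgebra k F) := by
    have : Module.Free k (MonoidAlgebra k F) :=
      Module.Free.of_basis (MonoidAlgebra.basis F k)
    infer_instance
  refine proj_instEq (inferInstance : Module k (MonoidAlgebra k F))
    (Module.compHom (MonoidAlgebra k F) (algebraMap k (MonoidAlgebra k F)))
    (Module.ext' _ _ fun c a => ?_) hcanon
  show c • a = algebraMap k (MonoidAlgebra k F) c • a
  rw [Algebra.smul_def, smul_eq_mul]

end GroupAlgProj

section LemmaA
variable {k : Type u} [CommRing k] {F : Type u} [Group F] [Finite F] [Fintype F]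

/-- Key lemma: a `kF`-module that is `k`-projective and has finite projective
dimension over `kF` is projective over `kF`. -/
theorem lemmaA : ∀ (m : ℕ) (N : Type u) (_ : AddCommMonoid N)
    (_ : Module (MonoidAlgebra k F) N),
    @Module.Projective k _ N _ (Module.compHom N (algebraMap k (MonoidAlgebra k F))) →
    HasProjDimLE (MonoidAlgebra k F) m N → Module.Projective (MonoidAlgebra k F) N
  | 0, N, _, _, _, h => h
  | m+1, N, _, _, hNk, ⟨P, _, _, f, hP, hf, hk⟩ => by
      letI := Module.compHom N (algebraMap k (MonoidAlgebra k F))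
      letI := Module.compHom P (algebraMap k (MonoidAlgebra k F))
      letI := Module.compHom (LinearMap.ker f) (algebraMap k (MonoidAlgebra k F))
      haveI := hNk
      -- P is k-projective
      have hPk : Module.Projective k P :=
        proj_res (algebraMap k (MonoidAlgebra k F)) groupAlgebra_k_proj hP
      -- the kernel is k-projective
      obtain ⟨s, hs⟩ := Module.projective_lifting_property
        (resMap (algebraMap k (MonoidAlgebra k F)) f) LinearMap.id hf
      have hkerk : Module.Projective k
          (LinearMap.ker (resMap (algebraMap k (MonoidAlgebra k F)) f)) := by
        letI : AddCommGroup P := Module.addCommMonoidToAddCommGroup k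
        letI : AddCommGroup N := Module.addCommMonoidToAddCommGroup k
        haveI := hPk
        have hmem : ∀ p : P, ((LinearMap.id : P →ₗ[k] P)
            - s.comp (resMap (algebraMap k (MonoidAlgebra k F)) f)) p
            ∈ LinearMap.ker (resMap (algebraMap k (MonoidAlgebra k F)) f) := by
          intro p
          rw [LinearMap.mem_ker, LinearMap.sub_apply, LinearMap.id_apply, LinearMap.comp_apply,
            (resMap (algebraMap k (MonoidAlgebra k F)) f).map_sub]
          have hss : ∀ b, (resMap (algebraMap k (MonoidAlgebra k F)) f) (s b) = b :=
            fun b => LinearMap.congr_fun hs b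
          rw [hss, sub_self]
        refine Module.Projective.of_split
          (LinearMap.ker (resMap (algebraMap k (MonoidAlgebra k F)) f)).subtype
          (((LinearMap.id : P →ₗ[k] P)
            - s.comp (resMap (algebraMap k (MonoidAlgebra k F)) f)).codRestrict _ hmem) ?_
        refine LinearMap.ext fun z => Subtype.ext ?_
        obtain ⟨x, hx⟩ := z
        have hx0 : (resMap (algebraMap k (MonoidAlgebra k F)) f) x = 0 := hx
        show ((LinearMap.id : P →ₗ[k] P)
            - s.comp (resMap (algebraMap k (MonoidAlgebra k F)) f)) x = x
        rw [LinearMap.sub_apply, LinearMap.id_apply, LinearMap.comp_apply, hx0, map_zero,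
          sub_zero]
      have hKk : @Module.Projective k _ (LinearMap.ker f) _
          (Module.compHom (LinearMap.ker f) (algebraMap k (MonoidAlgebra k F))) := by
        exact Module.Projective.of_equiv
          (resKerEquiv (algebraMap k (MonoidAlgebra k F)) f).symm
      have hkerproj : Module.Projective (MonoidAlgebra k F) (LinearMap.ker f) :=
        lemmaA m (LinearMap.ker f) _ _ hKk hk
      exact lemmaB hP f hf hkerproj hNk

end LemmaA

section MainProofAux

variable (k : Type u) [CommRing k] (G : Type u) [Group G]

theorem subgroupInclusion_algebraMap (F : Subgroup G) (c : k) :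
    subgroupInclusion k G F (algebraMap k (MonoidAlgebra k ↥F) c)
      = algebraMap k (MonoidAlgebra k G) c := by
  show (MonoidAlgebra.mapDomainRingHom k F.subtype)
      (MonoidAlgebra.single (1 : ↥F) c) = MonoidAlgebra.single (1 : G) c
  simp [MonoidAlgebra.mapDomainRingHom, Finsupp.mapDomain_single]

end MainProofAux

/-- If `G` is a group of type `Φ_k`, then the finitistic dimension of `kG` is
finite: there exists an integer `n` such that every `kG`-module of finite projective
dimension has projective dimension at most `n`. -/
theorem findim_finite_of_isTypePhi
    (k : Type u) [CommRing k] [IsNoetherianRing k] (hk : ∃ d, GlobalDimLE k d)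
    (G : Type u) [Group G] (hG : IsTypePhi k G) :
    ∃ n : ℕ, FindimLE k G n := by
  classical
  obtain ⟨d, hd⟩ := hk
  by_contra hcon
  push_neg at hcon
  -- counterexamples of arbitrarily large finite projective dimension
  have hex : ∀ n : ℕ, ∃ (M : Type u) (_ : AddCommMonoid M) (_ : Module (MonoidAlgebra k G) M),
      HasFinProjDim (MonoidAlgebra k G) M ∧ ¬ HasProjDimLE (MonoidAlgebra k G) (n + d) M := by
    intro n
    have hn := hcon (n + d)
    by_contra h2
    push_neg at h2
    exact hn fun M i1 i2 hfin => h2 M i1 i2 hfin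
  have hRG : @Module.Projective k _ (MonoidAlgebra k G) _
      (Module.compHom (MonoidAlgebra k G) (algebraMap k (MonoidAlgebra k G))) :=
    groupAlgebra_k_proj
  -- pass to d-th syzygies, which are k-projective
  have hKex : ∀ n : ℕ, ∃ (K : Type u) (_ : AddCommMonoid K) (_ : Module (MonoidAlgebra k G) K),
      HasFinProjDim (MonoidAlgebra k G) K ∧ ¬ HasProjDimLE (MonoidAlgebra k G) n K ∧
      @Module.Projective k _ K _
        (Module.compHom K (algebraMap k (MonoidAlgebra k G))) := by
    intro n
    obtain ⟨M, iM, mM, mfin, hM⟩ := hex n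
    obtain ⟨K, iK, mK, h1, h2, h3⟩ :=
      syzygy_lemma (algebraMap k (MonoidAlgebra k G)) hRG d hd d M iM mM
    refine ⟨K, iK, mK, ?_, ?_, ?_⟩
    · obtain ⟨m, hm⟩ := mfin
      exact ⟨m, h1 m (hpd_mono (Nat.le_add_right m d) hm)⟩
    · intro hKn
      exact hM (h2 n hKn)
    · have hdd : d - d = 0 := Nat.sub_self d
      rw [hdd] at h3
      exact h3
  choose Kt iK mK hfinK hnotK hlat using hKex
  letI : ∀ n, AddCommMonoid (Kt n) := iK
  letI : ∀ n, Module (MonoidAlgebra k G) (Kt n) := mK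
  -- the direct sum of all the syzygies
  have hKKfin : HasFinProjDim (MonoidAlgebra k G) (⨁ n, Kt n) := by
    refine (hG (⨁ n, Kt n) _ _).mpr ?_
    intro F hF
    letI := restrictToSubgroup k G F (⨁ n, Kt n)
    haveI : Finite ↥F := hF
    letI : Fintype ↥F := Fintype.ofFinite _
    suffices hproj : Module.Projective (MonoidAlgebra k ↥F) (⨁ n, Kt n) from ⟨0, hproj⟩
    -- each syzygy is `kF`-projective, by Lemma A
    letI resF : ∀ n, Module (MonoidAlgebra k ↥F) (Kt n) :=
      fun n => Module.compHom (Kt n) (subgroupInclusion k G F)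
    have hKproj : ∀ n, Module.Projective (MonoidAlgebra k ↥F) (Kt n) := by
      intro n
      -- finite projective dimension over kF, from the type Φ hypothesis
      have hfinF := ((hG (Kt n) _ _).mp (hfinK n)) F hF
      obtain ⟨m, hm⟩ := hfinF
      -- k-projectivity with respect to the kF-structure
      have hinstEq : (Module.compHom (Kt n) (algebraMap k (MonoidAlgebra k ↥F))
            : Module k (Kt n))
          = Module.compHom (Kt n) (algebraMap k (MonoidAlgebra k G)) := by
        refine Module.ext' _ _ fun c m' => ?_
        show subgroupInclusion k G F (algebraMap k (MonoidAlgebra k ↥F) c) • m'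
            = algebraMap k (MonoidAlgebra k G) c • m'
        rw [subgroupInclusion_algebraMap]
      have hlatF : @Module.Projective k _ (Kt n) _
          (Module.compHom (Kt n) (algebraMap k (MonoidAlgebra k ↥F))) :=
        proj_instEq _ _ hinstEq.symm (hlat n)
      exact lemmaA m (Kt n) _ _ hlatF hm
    -- the direct sum is therefore `kF`-projective
    have hinstEq2 : (DFinsupp.module : Module (MonoidAlgebra k ↥F) (Π₀ n, Kt n))
        = Module.compHom (⨁ n, Kt n) (subgroupInclusion k G F) := by
      refine Module.ext' _ _ fun a u => ?_
      refine DFinsupp.ext fun n => ?_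
      show a • u n = (subgroupInclusion k G F a • u) n
      rw [DFinsupp.smul_apply]
      rfl
    haveI := hKproj
    exact proj_instEq _ _ hinstEq2
      (inferInstanceAs (Module.Projective (MonoidAlgebra k ↥F) (Π₀ n, Kt n)))
  obtain ⟨mm, hmm⟩ := hKKfin
  refine hnotK mm ?_
  refine hpd_summand mm (DirectSum.lof (MonoidAlgebra k G) ℕ Kt mm)
    (DirectSum.component (MonoidAlgebra k G) ℕ Kt mm) (fun c => ?_) hmm
  exact DirectSum.component.lof_self (MonoidAlgebra k G) (ι := ℕ) (M := Kt) mm c
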